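/- For any inputs u_a, u_b ∈ U and any states x_a = (c_a, h_a) ∈ X and x_b = (c_b, h_b) ∈ X, the one-step LSTM updates (c_a⁺, h_a⁺) = f(x_a, u_a) and (c_b⁺, h_b⁺) = f(x_b, u_b) satisfy the componentwise vector inequality (‖c_a⁺ − c_b⁺‖, ‖h_a⁺ − h_b⁺‖)ᵀ ≤ A_δ · (‖c_a − c_b‖, ‖h_a − h_b‖)ᵀ + B_δ · ‖u_a − u_b‖. -/

import Mathlib

open Matrix Filter Set
open scoped ENNReal NNReal BigOperators

noncomputable section

namespace LSTMmpc

/-- The logistic sigmoid `σ(z) = 1/(1+e^{-z})`. -/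
def sigmoid (z : ℝ) : ℝ := 1 / (1 + Real.exp (-z))

/-- Euclidean norm of a finite real vector. -/
def enorm {k : ℕ} (v : Fin k → ℝ) : ℝ := Real.sqrt (∑ i, v i ^ 2)

/-- Sup (∞) norm of a finite real vector. -/
def vinf {k : ℕ} (v : Fin k → ℝ) : ℝ := ⨆ i, |v i|

/-- Spectral (ℓ²-induced) norm of a real matrix. -/
def spec {a b : ℕ} (M : Matrix (Fin a) (Fin b) ℝ) : ℝ :=
  ⨆ v : {v : Fin b → ℝ // enorm v ≤ 1}, enorm (M.mulVec v.1)

/-- Induced ∞-norm (maximum absolute row sum) of the horizontal block `[s•A, B, v]`. -/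
def rowNorm3 {n m : ℕ} (s : ℝ) (A : Matrix (Fin n) (Fin m) ℝ)
    (B : Matrix (Fin n) (Fin n) ℝ) (v : Fin n → ℝ) : ℝ :=
  ⨆ i, (∑ j, |s * A i j| + ∑ j, |B i j| + |v i|)

/-- Induced ∞-norm of the horizontal block `[s•A, B, v, C, t•D]`. -/
def rowNorm5 {n m p : ℕ} (s : ℝ) (A : Matrix (Fin n) (Fin m) ℝ)
    (B : Matrix (Fin n) (Fin n) ℝ) (v : Fin n → ℝ)
    (C : Matrix (Fin n) (Fin n) ℝ) (t : ℝ) (D : Matrix (Fin n) (Fin p) ℝ) : ℝ :=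
  ⨆ i, (∑ j, |s * A i j| + ∑ j, |B i j| + |v i| + ∑ j, |C i j| + ∑ j, |t * D i j|)

/-- Weighted norm `‖v‖_P = √(vᵀ P v)`. -/
def wnorm {k : ℕ} (P : Matrix (Fin k) (Fin k) ℝ) (v : Fin k → ℝ) : ℝ :=
  Real.sqrt (v ⬝ᵥ P.mulVec v)

/-- Minimum eigenvalue of a hermitian real matrix. -/
def lamMin {k : ℕ} (P : Matrix (Fin k) (Fin k) ℝ) (hP : P.IsHermitian) : ℝ :=
  ⨅ i, hP.eigenvalues i

/-- Maximum eigenvalue of a hermitian real matrix. -/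
def lamMax {k : ℕ} (P : Matrix (Fin k) (Fin k) ℝ) (hP : P.IsHermitian) : ℝ :=
  ⨆ i, hP.eigenvalues i

/-- Spectral radius (over `ℂ`) of a real square matrix. -/
def specRad {k : ℕ} (M : Matrix (Fin k) (Fin k) ℝ) : ℝ≥0∞ :=
  spectralRadius ℂ (M.map (fun x : ℝ => (x : ℂ)))

/-- Class `K∞` functions `[0,∞) → [0,∞)`. -/
def IsClassKInf (γ : ℝ → ℝ) : Prop :=
  ContinuousOn γ (Set.Ici 0) ∧ γ 0 = 0 ∧ StrictMonoOn γ (Set.Ici 0) ∧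
    (∀ s, 0 ≤ s → 0 ≤ γ s) ∧ Tendsto γ atTop atTop

/-- Class `KL` functions. -/
def IsClassKL (β : ℝ → ℕ → ℝ) : Prop :=
  (∀ k, ContinuousOn (fun s => β s k) (Set.Ici 0) ∧
      StrictMonoOn (fun s => β s k) (Set.Ici 0) ∧ β 0 k = 0) ∧
  (∀ s, 0 < s → StrictAnti (fun k => β s k) ∧ Tendsto (fun k => β s k) atTop (nhds 0)) ∧
  (∀ s, 0 ≤ s → ∀ k, 0 ≤ β s k)

/-- Weights of an LSTM network. -/
structure LSTM (n m p : ℕ) where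
  Wf : Matrix (Fin n) (Fin m) ℝ
  Wi : Matrix (Fin n) (Fin m) ℝ
  Wc : Matrix (Fin n) (Fin m) ℝ
  Wo : Matrix (Fin n) (Fin m) ℝ
  Uf : Matrix (Fin n) (Fin n) ℝ
  Ui : Matrix (Fin n) (Fin n) ℝ
  Uc : Matrix (Fin n) (Fin n) ℝ
  Uo : Matrix (Fin n) (Fin n) ℝ
  bf : Fin n → ℝ
  bi : Fin n → ℝ
  bc : Fin n → ℝ
  bo : Fin n → ℝ
  Wy : Matrix (Fin p) (Fin n) ℝ
  bY : Fin p → ℝ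

/-- LSTM state `(c, h)`. -/
abbrev State (n : ℕ) := (Fin n → ℝ) × (Fin n → ℝ)

/-- Augmented state `(c, h, d)`. -/
abbrev AugState (n p : ℕ) := (Fin n → ℝ) × (Fin n → ℝ) × (Fin p → ℝ)

variable {n m p : ℕ}

def stepC (S : LSTM n m p) (u : Fin m → ℝ) (c h : Fin n → ℝ) : Fin n → ℝ := fun j =>
  sigmoid ((S.Wf.mulVec u + S.Uf.mulVec h + S.bf) j) * c j +
    sigmoid ((S.Wi.mulVec u + S.Ui.mulVec h + S.bi) j) *
      Real.tanh ((S.Wc.mulVec u + S.Uc.mulVec h + S.bc) j)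

def stepH (S : LSTM n m p) (u : Fin m → ℝ) (c h : Fin n → ℝ) : Fin n → ℝ := fun j =>
  sigmoid ((S.Wo.mulVec u + S.Uo.mulVec h + S.bo) j) * Real.tanh (stepC S u c h j)

/-- One step of the LSTM dynamics `x⁺ = f(x, u)`. -/
def step (S : LSTM n m p) (x : State n) (u : Fin m → ℝ) : State n :=
  (stepC S u x.1 x.2, stepH S u x.1 x.2)

/-- Output map `g(x) = W_y h + b_y`. -/
def out (S : LSTM n m p) (x : State n) : Fin p → ℝ := S.Wy.mulVec x.2 + S.bY

/-- LSTM trajectory. -/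
def traj (S : LSTM n m p) (x0 : State n) (u : ℕ → Fin m → ℝ) : ℕ → State n
  | 0 => x0
  | k + 1 => step S (traj S x0 u k) (u k)

def sFb (S : LSTM n m p) (umax : ℝ) : ℝ := sigmoid (rowNorm3 umax S.Wf S.Uf S.bf)
def sIb (S : LSTM n m p) (umax : ℝ) : ℝ := sigmoid (rowNorm3 umax S.Wi S.Ui S.bi)
def sOb (S : LSTM n m p) (umax : ℝ) : ℝ := sigmoid (rowNorm3 umax S.Wo S.Uo S.bo)
def sCb (S : LSTM n m p) (umax : ℝ) : ℝ := Real.tanh (rowNorm3 umax S.Wc S.Uc S.bc)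
def sXb (S : LSTM n m p) (umax : ℝ) : ℝ :=
  Real.tanh (sIb S umax * sCb S umax / (1 - sFb S umax))
def alphaD (S : LSTM n m p) (umax : ℝ) : ℝ :=
  (1/4) * spec S.Uf * (sIb S umax * sCb S umax / (1 - sFb S umax)) +
    sIb S umax * spec S.Uc + (1/4) * spec S.Ui * sCb S umax
def betaD (S : LSTM n m p) (umax : ℝ) : ℝ :=
  (1/4) * spec S.Wf * (sIb S umax * sCb S umax / (1 - sFb S umax)) +
    sIb S umax * spec S.Wc + (1/4) * spec S.Wi * sCb S umax
def Adelta (S : LSTM n m p) (umax : ℝ) : Matrix (Fin 2) (Fin 2) ℝ :=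
  !![sFb S umax, alphaD S umax;
     sOb S umax * sFb S umax, alphaD S umax * sOb S umax + (1/4) * sXb S umax * spec S.Uo]
def Bdelta (S : LSTM n m p) (umax : ℝ) : Fin 2 → ℝ :=
  ![betaD S umax, betaD S umax * sOb S umax + (1/4) * sXb S umax * spec S.Wo]

def setU (m : ℕ) (umax : ℝ) : Set (Fin m → ℝ) := {u | vinf u ≤ umax}
def setH (n : ℕ) : Set (Fin n → ℝ) := {h | vinf h ≤ 1}
def setC (S : LSTM n m p) (umax : ℝ) : Set (Fin n → ℝ) :=
  {c | vinf c ≤ sIb S umax * sCb S umax / (1 - sFb S umax)}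
def setX (S : LSTM n m p) (umax : ℝ) : Set (State n) := (setC S umax) ×ˢ (setH n)
def setD (p : ℕ) (dmax : ℝ) : Set (Fin p → ℝ) := {d | vinf d ≤ dmax}

/-- Euclidean norm of the full state. -/
def xnorm {n : ℕ} (x : State n) : ℝ := Real.sqrt (∑ i, x.1 i ^ 2 + ∑ i, x.2 i ^ 2)

/-- Euclidean norm of the augmented state. -/
def chinorm {n p : ℕ} (χ : AugState n p) : ℝ :=
  Real.sqrt (∑ i, χ.1 i ^ 2 + ∑ i, χ.2.1 i ^ 2 + ∑ i, χ.2.2 i ^ 2)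

/-- Incremental input-to-state stability of the LSTM in `X` and `U`. -/
def deltaISS (S : LSTM n m p) (umax : ℝ) : Prop :=
  ∃ β γ, IsClassKL β ∧ IsClassKInf γ ∧
    ∀ (k : ℕ) (xa0 xb0 : State n), xa0 ∈ setX S umax → xb0 ∈ setX S umax →
      ∀ ua ub : ℕ → Fin m → ℝ,
        (∀ h < k, ua h ∈ setU m umax) → (∀ h < k, ub h ∈ setU m umax) →
        xnorm (traj S xa0 ua k - traj S xb0 ub k) ≤
          β (xnorm (xa0 - xb0)) k + γ (⨆ h ∈ Finset.range k, enorm (ua h - ub h))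

/-- Observer gains. -/
structure Gains (n p : ℕ) where
  Lf : Matrix (Fin n) (Fin p) ℝ
  Li : Matrix (Fin n) (Fin p) ℝ
  Lo : Matrix (Fin n) (Fin p) ℝ
  Ld : Matrix (Fin p) (Fin p) ℝ

/-- Componentwise saturation to `[-dmax, dmax]`. -/
def sat {p : ℕ} (dmax : ℝ) (v : Fin p → ℝ) : Fin p → ℝ := fun j =>
  min (max (v j) (-dmax)) dmax

/-- Observer output `ŷ = W_y ĥ + b_y + d̂`. -/
def yhat (S : LSTM n m p) (hh : Fin n → ℝ) (dh : Fin p → ℝ) : Fin p → ℝ :=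
  S.Wy.mulVec hh + S.bY + dh

def obsC (S : LSTM n m p) (G : Gains n p) (u : Fin m → ℝ) (y : Fin p → ℝ)
    (ch hh : Fin n → ℝ) (dh : Fin p → ℝ) : Fin n → ℝ := fun j =>
  sigmoid ((S.Wf.mulVec u + S.Uf.mulVec hh + S.bf + G.Lf.mulVec (y - yhat S hh dh)) j) * ch j +
    sigmoid ((S.Wi.mulVec u + S.Ui.mulVec hh + S.bi + G.Li.mulVec (y - yhat S hh dh)) j) *
      Real.tanh ((S.Wc.mulVec u + S.Uc.mulVec hh + S.bc) j)

def obsH (S : LSTM n m p) (G : Gains n p) (u : Fin m → ℝ) (y : Fin p → ℝ)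
    (ch hh : Fin n → ℝ) (dh : Fin p → ℝ) : Fin n → ℝ := fun j =>
  sigmoid ((S.Wo.mulVec u + S.Uo.mulVec hh + S.bo + G.Lo.mulVec (y - yhat S hh dh)) j) *
    Real.tanh (obsC S G u y ch hh dh j)

def obsD (S : LSTM n m p) (G : Gains n p) (dmax : ℝ) (y : Fin p → ℝ)
    (hh : Fin n → ℝ) (dh : Fin p → ℝ) : Fin p → ℝ :=
  sat dmax (dh + G.Ld.mulVec (y - yhat S hh dh))

/-- One step of the observer. -/
def obsStep (S : LSTM n m p) (G : Gains n p) (dmax : ℝ) (u : Fin m → ℝ) (y : Fin p → ℝ)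
    (χ : AugState n p) : AugState n p :=
  (obsC S G u y χ.1 χ.2.1 χ.2.2, obsH S G u y χ.1 χ.2.1 χ.2.2, obsD S G dmax y χ.2.1 χ.2.2)

/-- Observer trajectory. -/
def obsTraj (S : LSTM n m p) (G : Gains n p) (dmax : ℝ) (u : ℕ → Fin m → ℝ)
    (y : ℕ → Fin p → ℝ) (χ0 : AugState n p) : ℕ → AugState n p
  | 0 => χ0
  | k + 1 => obsStep S G dmax (u k) (y k) (obsTraj S G dmax u y χ0 k)

def sFh (S : LSTM n m p) (G : Gains n p) (umax dmax : ℝ) : ℝ :=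
  sigmoid (rowNorm5 umax S.Wf (S.Uf - G.Lf * S.Wy) S.bf (G.Lf * S.Wy) (2 * dmax) G.Lf)
def sIh (S : LSTM n m p) (G : Gains n p) (umax dmax : ℝ) : ℝ :=
  sigmoid (rowNorm5 umax S.Wi (S.Ui - G.Li * S.Wy) S.bi (G.Li * S.Wy) (2 * dmax) G.Li)
def sOh (S : LSTM n m p) (G : Gains n p) (umax dmax : ℝ) : ℝ :=
  sigmoid (rowNorm5 umax S.Wo (S.Uo - G.Lo * S.Wy) S.bo (G.Lo * S.Wy) (2 * dmax) G.Lo)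
def alphaH (S : LSTM n m p) (G : Gains n p) (umax : ℝ) : ℝ :=
  (1/4) * (sIb S umax * sCb S umax / (1 - sFb S umax)) * spec (S.Uf - G.Lf * S.Wy) +
    sIb S umax * spec S.Uc + (1/4) * sCb S umax * spec (S.Ui - G.Li * S.Wy)
def betaH (S : LSTM n m p) (G : Gains n p) (umax : ℝ) : ℝ :=
  (1/4) * (sIb S umax * sCb S umax / (1 - sFb S umax)) * spec G.Lf +
    (1/4) * sCb S umax * spec G.Li
def gammaH (S : LSTM n m p) (G : Gains n p) (umax dmax : ℝ) : ℝ :=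
  sOh S G umax dmax * alphaH S G umax + (1/4) * sXb S umax * spec (S.Uo - G.Lo * S.Wy)
def Ad (S : LSTM n m p) (G : Gains n p) (umax dmax : ℝ) : Matrix (Fin 3) (Fin 3) ℝ :=
  !![sFh S G umax dmax, alphaH S G umax, betaH S G umax;
     sOh S G umax dmax * sFh S G umax dmax, gammaH S G umax dmax,
       sOh S G umax dmax * betaH S G umax + (1/4) * sXb S umax * spec G.Lo;
     0, spec (G.Ld * S.Wy), spec ((1 : Matrix (Fin p) (Fin p) ℝ) - G.Ld)]

def setChat (S : LSTM n m p) (G : Gains n p) (umax dmax : ℝ) : Set (Fin n → ℝ) :=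
  {c | vinf c ≤ sIh S G umax dmax * sCb S umax / (1 - sFh S G umax dmax)}
def setIhat (S : LSTM n m p) (G : Gains n p) (umax dmax : ℝ) : Set (AugState n p) :=
  (setChat S G umax dmax) ×ˢ ((setH n) ×ˢ (setD p dmax))

/-- Incremental Lyapunov function for the LSTM. -/
def Vs {n : ℕ} (Ps : Matrix (Fin 2) (Fin 2) ℝ) (xa xb : State n) : ℝ :=
  wnorm Ps ![enorm (xa.1 - xb.1), enorm (xa.2 - xb.2)]

/-- Lyapunov function for the observer estimation error. -/
def Vo {n p : ℕ} (Po : Matrix (Fin 3) (Fin 3) ℝ) (χh χ : AugState n p) : ℝ :=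
  wnorm Po ![enorm (χh.1 - χ.1), enorm (χh.2.1 - χ.2.1), enorm (χh.2.2 - χ.2.2)]

/-- Disturbance-augmented LSTM update applied to the observer state. -/
def faug (S : LSTM n m p) (χ : AugState n p) (u : Fin m → ℝ) : AugState n p :=
  (stepC S u χ.1 χ.2.1, stepH S u χ.1 χ.2.1, χ.2.2)

def alphaBar (S : LSTM n m p) (G : Gains n p) (umax dmax : ℝ) : ℝ :=
  (1/4) * (sIh S G umax dmax * sCb S umax / (1 - sFh S G umax dmax)) * spec (G.Lf * S.Wy) +
    (1/4) * sCb S umax * spec (G.Li * S.Wy)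
def betaBar (S : LSTM n m p) (G : Gains n p) (umax dmax : ℝ) : ℝ :=
  (1/4) * (sIh S G umax dmax * sCb S umax / (1 - sFh S G umax dmax)) * spec G.Lf +
    (1/4) * sCb S umax * spec G.Li
def gammaBar (S : LSTM n m p) (G : Gains n p) (umax dmax : ℝ) : ℝ :=
  (1/4) * Real.tanh (sIh S G umax dmax * sCb S umax / (1 - sFh S G umax dmax))
def Lmat (S : LSTM n m p) (G : Gains n p) (umax dmax : ℝ) : Matrix (Fin 3) (Fin 3) ℝ :=
  !![0, alphaBar S G umax dmax, betaBar S G umax dmax;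
     0, gammaBar S G umax dmax * spec (G.Lo * S.Wy) + sOb S umax * alphaBar S G umax dmax,
       gammaBar S G umax dmax * spec G.Lo + sOb S umax * betaBar S G umax dmax;
     0, spec (G.Ld * S.Wy), spec G.Ld]


/-!
Each coordinate of `f` is built from gates `σ(W u + U h + b)` and `tanh(W u + U h + b)`. On
`U × H` the gate arguments are bounded by the row norms in `σ̄f, σ̄i, σ̄o, σ̄c`, so the gates are
bounded by these constants; moreover `σ` is `1/4`-Lipschitz and `tanh` is `1`-Lipschitz, and a
gate argument moves by at most `‖U‖ ‖Δh‖ + ‖W‖ ‖Δu‖`. Splitting every difference of products as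
`a b - a' b' = a (b - b') + (a - a') b'` and bounding the bounded factor by its constant gives the
first row of the estimate. The cell bound `c̄ = σ̄i σ̄c / (1 - σ̄f)` is a fixed point of
`c ↦ σ̄f c + σ̄i σ̄c`, so `C` is invariant and `|tanh c⁺| ≤ σ̄x`; this, together with the first row,
gives the second.
-/

lemma sigmoid_eq_real_sigmoid : sigmoid = Real.sigmoid := by
  funext z
  rw [sigmoid, Real.sigmoid_def, one_div]

lemma sigmoid_pos (z : ℝ) : 0 < sigmoid z := by
  rw [sigmoid_eq_real_sigmoid]
  exact Real.sigmoid_pos z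

lemma abs_sigmoid_sub_le (a b : ℝ) : |sigmoid a - sigmoid b| ≤ 1 / 4 * |a - b| := by
  rw [sigmoid_eq_real_sigmoid]
  refine convex_univ.norm_image_sub_le_of_norm_hasDerivWithin_le
    (fun x _ => (Real.hasDerivAt_sigmoid x).hasDerivWithinAt) (fun x _ => ?_)
    (mem_univ b) (mem_univ a)
  have := Real.sigmoid_lt_one x
  rw [Real.norm_eq_abs, abs_of_nonneg (mul_nonneg (Real.sigmoid_pos x).le (by linarith))]
  nlinarith [sq_nonneg (Real.sigmoid x - 1 / 2)]

lemma tanh_eq_two_mul_sigmoid_sub_one (x : ℝ) : Real.tanh x = 2 * sigmoid (2 * x) - 1 := by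
  have hexp : Real.exp (-(2 * x)) = (Real.exp x ^ 2)⁻¹ := by
    rw [← Real.exp_nat_mul, ← Real.exp_neg]
    norm_num
  rw [Real.tanh_eq, sigmoid, hexp, Real.exp_neg]
  have := Real.exp_pos x
  field_simp
  ring

lemma tanh_monotone : Monotone Real.tanh := fun a b hab => by
  rw [tanh_eq_two_mul_sigmoid_sub_one, tanh_eq_two_mul_sigmoid_sub_one, sigmoid_eq_real_sigmoid]
  gcongr

lemma abs_tanh_sub_le (a b : ℝ) : |Real.tanh a - Real.tanh b| ≤ |a - b| := by
  rw [tanh_eq_two_mul_sigmoid_sub_one, tanh_eq_two_mul_sigmoid_sub_one]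
  calc |2 * sigmoid (2 * a) - 1 - (2 * sigmoid (2 * b) - 1)|
      = 2 * |sigmoid (2 * a) - sigmoid (2 * b)| := by
        rw [← abs_two, ← abs_mul]
        ring_nf
    _ ≤ 2 * (1 / 4 * |2 * a - 2 * b|) := by gcongr; exact abs_sigmoid_sub_le _ _
    _ ≤ |a - b| := by rw [← mul_sub, abs_mul, abs_two]; linarith

lemma abs_tanh_le_tanh {a c : ℝ} (h : |a| ≤ c) : |Real.tanh a| ≤ Real.tanh c := by
  rw [abs_le] at h ⊢
  constructor
  · rw [← Real.tanh_neg]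
    exact tanh_monotone (by linarith)
  · exact tanh_monotone h.2

lemma tanh_nonneg {c : ℝ} (h : 0 ≤ c) : 0 ≤ Real.tanh c := by
  simpa using tanh_monotone h

lemma abs_le_vinf {k : ℕ} (v : Fin k → ℝ) (j : Fin k) : |v j| ≤ vinf v :=
  le_ciSup (f := fun i => |v i|) (Set.finite_range _).bddAbove j

lemma enorm_eq_norm {k : ℕ} (v : Fin k → ℝ) : enorm v = ‖WithLp.toLp 2 v‖ := by
  simp [enorm, EuclideanSpace.norm_eq]

lemma enorm_add_le {k : ℕ} (v w : Fin k → ℝ) : enorm (v + w) ≤ enorm v + enorm w := by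
  simpa only [enorm_eq_norm, WithLp.toLp_add] using norm_add_le _ _

lemma enorm_le_mul_of_abs_le {k : ℕ} {v w : Fin k → ℝ} {K : ℝ} (hK : 0 ≤ K)
    (h : ∀ j, |v j| ≤ K * |w j|) : enorm v ≤ K * enorm w := by
  rw [← Real.sqrt_sq hK, enorm, enorm, ← Real.sqrt_mul (sq_nonneg K), Finset.mul_sum]
  gcongr with j
  rw [← sq_abs (v j), ← sq_abs (w j), ← mul_pow]
  exact pow_le_pow_left₀ (abs_nonneg _) (h j) 2

lemma enorm_comp_sub_comp_le {k : ℕ} {φ : ℝ → ℝ} {L : ℝ} (hL : 0 ≤ L)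
    (hφ : ∀ x y, |φ x - φ y| ≤ L * |x - y|) (a b : Fin k → ℝ) :
    enorm (φ ∘ a - φ ∘ b) ≤ L * enorm (a - b) :=
  enorm_le_mul_of_abs_le hL fun j => hφ (a j) (b j)

lemma enorm_tanh_comp_sub_le {k : ℕ} (a b : Fin k → ℝ) :
    enorm (Real.tanh ∘ a - Real.tanh ∘ b) ≤ enorm (a - b) := by
  simpa using enorm_comp_sub_comp_le zero_le_one
    (fun x y => (abs_tanh_sub_le x y).trans_eq (one_mul _).symm) a b

lemma enorm_mul_sub_mul_le {k : ℕ} {a a' b b' : Fin k → ℝ} {A B : ℝ} (hA : 0 ≤ A) (hB : 0 ≤ B)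
    (ha : ∀ j, |a j| ≤ A) (hb' : ∀ j, |b' j| ≤ B) :
    enorm (a * b - a' * b') ≤ A * enorm (b - b') + B * enorm (a - a') := by
  have hsplit : a * b - a' * b' = a * (b - b') + (a - a') * b' := by ring
  rw [hsplit]
  refine (enorm_add_le _ _).trans (add_le_add ?_ ?_)
  · refine enorm_le_mul_of_abs_le hA fun j => ?_
    rw [Pi.mul_apply, abs_mul]
    exact mul_le_mul_of_nonneg_right (ha j) (abs_nonneg _)
  · refine enorm_le_mul_of_abs_le hB fun j => ?_
    rw [Pi.mul_apply, abs_mul, mul_comm]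
    exact mul_le_mul_of_nonneg_right (hb' j) (abs_nonneg _)

open scoped Matrix.Norms.L2Operator in
lemma spec_eq_l2_opNorm {a b : ℕ} (M : Matrix (Fin a) (Fin b) ℝ) : spec M = ‖M‖ := by
  rw [l2_opNorm_def, ← ContinuousLinearMap.sSup_unitClosedBall_eq_norm, spec, iSup]
  congr 1
  ext r
  simp only [enorm_eq_norm, Set.mem_range, Subtype.exists, exists_prop, Set.mem_image,
    Metric.mem_closedBall, dist_zero_right, LinearEquiv.trans_apply,
    LinearMap.coe_toContinuousLinearMap']
  constructor
  · rintro ⟨v, hv, rfl⟩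
    exact ⟨WithLp.toLp 2 v, hv, by simp⟩
  · rintro ⟨x, hx, rfl⟩
    exact ⟨x.ofLp, by simpa using hx, rfl⟩

open scoped Matrix.Norms.L2Operator in
lemma enorm_mulVec_le {a b : ℕ} (M : Matrix (Fin a) (Fin b) ℝ) (v : Fin b → ℝ) :
    enorm (M *ᵥ v) ≤ spec M * enorm v := by
  rw [spec_eq_l2_opNorm, enorm_eq_norm, enorm_eq_norm]
  exact M.l2_opNorm_mulVec (WithLp.toLp 2 v)

section Gate

variable (W : Matrix (Fin n) (Fin m) ℝ) (U : Matrix (Fin n) (Fin n) ℝ) (b : Fin n → ℝ)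

def gate (u : Fin m → ℝ) (h : Fin n → ℝ) : Fin n → ℝ := W *ᵥ u + U *ᵥ h + b

lemma rowNorm3_nonneg (umax : ℝ) : 0 ≤ rowNorm3 umax W U b :=
  Real.iSup_nonneg fun _ => by positivity

lemma abs_gate_le_rowNorm3 {umax : ℝ} {u : Fin m → ℝ} {h : Fin n → ℝ}
    (hu : vinf u ≤ umax) (hh : vinf h ≤ 1) (j : Fin n) :
    |gate W U b u h j| ≤ rowNorm3 umax W U b := by
  have hWu : |(W *ᵥ u) j| ≤ ∑ k, |umax * W j k| := by
    rw [mulVec, dotProduct]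
    refine (Finset.abs_sum_le_sum_abs _ _).trans (Finset.sum_le_sum fun k _ => ?_)
    rw [abs_mul, abs_mul, mul_comm |umax|]
    exact mul_le_mul_of_nonneg_left
      (((abs_le_vinf u k).trans hu).trans (le_abs_self umax)) (abs_nonneg _)
  have hUh : |(U *ᵥ h) j| ≤ ∑ k, |U j k| := by
    rw [mulVec, dotProduct]
    refine (Finset.abs_sum_le_sum_abs _ _).trans (Finset.sum_le_sum fun k _ => ?_)
    rw [abs_mul]
    exact mul_le_of_le_one_right (abs_nonneg _) ((abs_le_vinf h k).trans hh)
  calc |gate W U b u h j| ≤ |(W *ᵥ u) j| + |(U *ᵥ h) j| + |b j| := abs_add_three _ _ _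
    _ ≤ ∑ k, |umax * W j k| + ∑ k, |U j k| + |b j| := by gcongr
    _ ≤ rowNorm3 umax W U b :=
      le_ciSup (f := fun i => ∑ k, |umax * W i k| + ∑ k, |U i k| + |b i|)
        (Set.finite_range _).bddAbove j

lemma abs_sigmoid_gate_le {umax : ℝ} {u : Fin m → ℝ} {h : Fin n → ℝ}
    (hu : vinf u ≤ umax) (hh : vinf h ≤ 1) (j : Fin n) :
    |(sigmoid ∘ gate W U b u h) j| ≤ sigmoid (rowNorm3 umax W U b) := by
  rw [Function.comp_apply, abs_of_pos (sigmoid_pos _), sigmoid_eq_real_sigmoid]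
  exact Real.sigmoid_monotone ((le_abs_self _).trans (abs_gate_le_rowNorm3 W U b hu hh j))

lemma abs_tanh_gate_le {umax : ℝ} {u : Fin m → ℝ} {h : Fin n → ℝ}
    (hu : vinf u ≤ umax) (hh : vinf h ≤ 1) (j : Fin n) :
    |(Real.tanh ∘ gate W U b u h) j| ≤ Real.tanh (rowNorm3 umax W U b) :=
  abs_tanh_le_tanh (abs_gate_le_rowNorm3 W U b hu hh j)

lemma enorm_gate_sub_le (ua ub : Fin m → ℝ) (ha hb : Fin n → ℝ) :
    enorm (gate W U b ua ha - gate W U b ub hb) ≤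
      spec U * enorm (ha - hb) + spec W * enorm (ua - ub) := by
  have hdiff : gate W U b ua ha - gate W U b ub hb = U *ᵥ (ha - hb) + W *ᵥ (ua - ub) := by
    simp only [gate, mulVec_sub]
    abel
  rw [hdiff]
  exact (enorm_add_le _ _).trans (add_le_add (enorm_mulVec_le _ _) (enorm_mulVec_le _ _))

lemma enorm_sigmoid_gate_sub_le (ua ub : Fin m → ℝ) (ha hb : Fin n → ℝ) :
    enorm (sigmoid ∘ gate W U b ua ha - sigmoid ∘ gate W U b ub hb) ≤
      1 / 4 * (spec U * enorm (ha - hb) + spec W * enorm (ua - ub)) :=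
  (enorm_comp_sub_comp_le (by norm_num) abs_sigmoid_sub_le _ _).trans
    (by gcongr; exact enorm_gate_sub_le W U b ua ub ha hb)

lemma enorm_tanh_gate_sub_le (ua ub : Fin m → ℝ) (ha hb : Fin n → ℝ) :
    enorm (Real.tanh ∘ gate W U b ua ha - Real.tanh ∘ gate W U b ub hb) ≤
      spec U * enorm (ha - hb) + spec W * enorm (ua - ub) :=
  (enorm_tanh_comp_sub_le _ _).trans (enorm_gate_sub_le W U b ua ub ha hb)

end Gate

section Step

variable (S : LSTM n m p) (umax : ℝ)

abbrev cBar : ℝ := sIb S umax * sCb S umax / (1 - sFb S umax)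

lemma stepC_eq (u : Fin m → ℝ) (c h : Fin n → ℝ) :
    stepC S u c h = (sigmoid ∘ gate S.Wf S.Uf S.bf u h) * c +
      (sigmoid ∘ gate S.Wi S.Ui S.bi u h) * (Real.tanh ∘ gate S.Wc S.Uc S.bc u h) := rfl

lemma stepH_eq (u : Fin m → ℝ) (c h : Fin n → ℝ) :
    stepH S u c h = (sigmoid ∘ gate S.Wo S.Uo S.bo u h) * (Real.tanh ∘ stepC S u c h) := rfl

lemma sFb_nonneg : 0 ≤ sFb S umax := (sigmoid_pos _).le

lemma sIb_nonneg : 0 ≤ sIb S umax := (sigmoid_pos _).le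

lemma sOb_nonneg : 0 ≤ sOb S umax := (sigmoid_pos _).le

lemma sCb_nonneg : 0 ≤ sCb S umax := tanh_nonneg (rowNorm3_nonneg _ _ _ _)

lemma one_sub_sFb_pos : 0 < 1 - sFb S umax := by
  have := sigmoid_eq_real_sigmoid ▸ Real.sigmoid_lt_one (rowNorm3 umax S.Wf S.Uf S.bf)
  rw [sFb]
  linarith

lemma cBar_nonneg : 0 ≤ cBar S umax :=
  div_nonneg (mul_nonneg (sIb_nonneg S umax) (sCb_nonneg S umax)) (one_sub_sFb_pos S umax).le

lemma sXb_nonneg : 0 ≤ sXb S umax := tanh_nonneg (cBar_nonneg S umax)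

lemma sFb_mul_cBar_add_sIb_mul_sCb :
    sFb S umax * cBar S umax + sIb S umax * sCb S umax = cBar S umax := by
  have := (one_sub_sFb_pos S umax).ne'
  field_simp
  ring

lemma abs_stepC_le {u : Fin m → ℝ} {c h : Fin n → ℝ} (hu : u ∈ setU m umax)
    (hc : c ∈ setC S umax) (hh : h ∈ setH n) (j : Fin n) :
    |stepC S u c h j| ≤ cBar S umax := by
  have hf := abs_sigmoid_gate_le S.Wf S.Uf S.bf hu hh j
  have hi := abs_sigmoid_gate_le S.Wi S.Ui S.bi hu hh j
  have ht := abs_tanh_gate_le S.Wc S.Uc S.bc hu hh j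
  have hcj : |c j| ≤ cBar S umax := (abs_le_vinf c j).trans hc
  rw [stepC_eq, Pi.add_apply, Pi.mul_apply, Pi.mul_apply, ← sFb_mul_cBar_add_sIb_mul_sCb]
  refine (abs_add_le _ _).trans (add_le_add ?_ ?_) <;> rw [abs_mul]
  · exact mul_le_mul hf hcj (abs_nonneg _) (sFb_nonneg S umax)
  · exact mul_le_mul hi ht (abs_nonneg _) (sIb_nonneg S umax)

variable {umax} {ua ub : Fin m → ℝ} {ca cb ha hb : Fin n → ℝ}

lemma enorm_stepC_sub_le (hua : ua ∈ setU m umax) (hub : ub ∈ setU m umax)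
    (hcb : cb ∈ setC S umax) (hha : ha ∈ setH n) (hhb : hb ∈ setH n) :
    enorm (stepC S ua ca ha - stepC S ub cb hb) ≤
      sFb S umax * enorm (ca - cb) + alphaD S umax * enorm (ha - hb) +
        betaD S umax * enorm (ua - ub) := by
  rw [stepC_eq, stepC_eq, add_sub_add_comm]
  have hforget := enorm_mul_sub_mul_le (sFb_nonneg S umax) (cBar_nonneg S umax)
    (abs_sigmoid_gate_le S.Wf S.Uf S.bf hua hha) (b := ca)
    (a' := sigmoid ∘ gate S.Wf S.Uf S.bf ub hb)
    fun j => (abs_le_vinf cb j).trans hcb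
  have hinput := enorm_mul_sub_mul_le (sIb_nonneg S umax) (sCb_nonneg S umax)
    (abs_sigmoid_gate_le S.Wi S.Ui S.bi hua hha) (b := Real.tanh ∘ gate S.Wc S.Uc S.bc ua ha)
    (a' := sigmoid ∘ gate S.Wi S.Ui S.bi ub hb) (abs_tanh_gate_le S.Wc S.Uc S.bc hub hhb)
  have hf := enorm_sigmoid_gate_sub_le S.Wf S.Uf S.bf ua ub ha hb
  have hi := enorm_sigmoid_gate_sub_le S.Wi S.Ui S.bi ua ub ha hb
  have hc := enorm_tanh_gate_sub_le S.Wc S.Uc S.bc ua ub ha hb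
  have := cBar_nonneg S umax
  have := sIb_nonneg S umax
  have := sCb_nonneg S umax
  calc _ ≤ _ := enorm_add_le _ _
    _ ≤ _ := add_le_add hforget hinput
    _ ≤ sFb S umax * enorm (ca - cb) +
          cBar S umax * (1 / 4 * (spec S.Uf * enorm (ha - hb) + spec S.Wf * enorm (ua - ub))) +
        (sIb S umax * (spec S.Uc * enorm (ha - hb) + spec S.Wc * enorm (ua - ub)) +
          sCb S umax * (1 / 4 * (spec S.Ui * enorm (ha - hb) + spec S.Wi * enorm (ua - ub)))) := by
      gcongr
    _ = _ := by rw [alphaD, betaD]; ring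

lemma enorm_stepH_sub_le (hua : ua ∈ setU m umax) (hub : ub ∈ setU m umax)
    (hcb : cb ∈ setC S umax) (hha : ha ∈ setH n) (hhb : hb ∈ setH n) :
    enorm (stepH S ua ca ha - stepH S ub cb hb) ≤
      sOb S umax * sFb S umax * enorm (ca - cb) +
        (alphaD S umax * sOb S umax + 1 / 4 * sXb S umax * spec S.Uo) * enorm (ha - hb) +
        (betaD S umax * sOb S umax + 1 / 4 * sXb S umax * spec S.Wo) * enorm (ua - ub) := by
  rw [stepH_eq, stepH_eq]
  have hsplit := enorm_mul_sub_mul_le (sOb_nonneg S umax) (sXb_nonneg S umax)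
    (abs_sigmoid_gate_le S.Wo S.Uo S.bo hua hha) (b := Real.tanh ∘ stepC S ua ca ha)
    (a' := sigmoid ∘ gate S.Wo S.Uo S.bo ub hb) (b' := Real.tanh ∘ stepC S ub cb hb)
    fun j => abs_tanh_le_tanh (abs_stepC_le S umax hub hcb hhb j)
  have htanh := enorm_tanh_comp_sub_le (stepC S ua ca ha) (stepC S ub cb hb)
  have hc := enorm_stepC_sub_le S (ca := ca) hua hub hcb hha hhb
  have ho := enorm_sigmoid_gate_sub_le S.Wo S.Uo S.bo ua ub ha hb
  have := sOb_nonneg S umax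
  have := sXb_nonneg S umax
  calc _ ≤ _ := hsplit
    _ ≤ sOb S umax * (sFb S umax * enorm (ca - cb) + alphaD S umax * enorm (ha - hb) +
          betaD S umax * enorm (ua - ub)) +
        sXb S umax * (1 / 4 * (spec S.Uo * enorm (ha - hb) + spec S.Wo * enorm (ua - ub))) := by
      gcongr
      exact htanh.trans hc
    _ = _ := by ring

end Step

theorem statement0_general {n m p : ℕ} (S : LSTM n m p) (umax : ℝ)
    (ua ub : Fin m → ℝ) (hua : ua ∈ setU m umax) (hub : ub ∈ setU m umax)
    (xa xb : State n) (hxa : xa ∈ setX S umax) (hxb : xb ∈ setX S umax) :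
    ∀ i : Fin 2,
      ![enorm ((step S xa ua).1 - (step S xb ub).1),
        enorm ((step S xa ua).2 - (step S xb ub).2)] i ≤
      (Adelta S umax).mulVec ![enorm (xa.1 - xb.1), enorm (xa.2 - xb.2)] i +
        Bdelta S umax i * enorm (ua - ub) := by
  rw [Fin.forall_fin_two]
  constructor
  · simpa [step, Adelta, Bdelta, mulVec, dotProduct, Fin.sum_univ_two] using
      enorm_stepC_sub_le S (ca := xa.1) hua hub hxb.1 hxa.2 hxb.2
  · simpa [step, Adelta, Bdelta, mulVec, dotProduct, Fin.sum_univ_two] using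
      enorm_stepH_sub_le S (ca := xa.1) hua hub hxb.1 hxa.2 hxb.2

/-- one-step incremental bound for the LSTM (Theorem 1, eq. (13)). -/
theorem statement0 {n m p : ℕ} (S : LSTM n m p) (umax : ℝ) (hu : 0 < umax)
    (ua ub : Fin m → ℝ) (hua : ua ∈ setU m umax) (hub : ub ∈ setU m umax)
    (xa xb : State n) (hxa : xa ∈ setX S umax) (hxb : xb ∈ setX S umax) :
    ∀ i : Fin 2,
      ![enorm ((step S xa ua).1 - (step S xb ub).1),
        enorm ((step S xa ua).2 - (step S xb ub).2)] i ≤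
      (Adelta S umax).mulVec ![enorm (xa.1 - xb.1), enorm (xa.2 - xb.2)] i +
        Bdelta S umax i * enorm (ua - ub) :=
  statement0_general S umax ua ub hua hub xa xb hxa hxb

end LSTMmpc
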